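/- The Zhang–Yeung-type expression is nonnegative for random variables arising as functions of independent sources: let L₁, L₂ be independent finitely supported random variables, and define C, D, E, F where C is a function of L₁ alone, F is a function of L₂ alone, and D, E are arbitrary functions of (L₁, L₂). Then the Shannon inequality budget I(D:E|F) + I(D:E|C) + I(F:C) − I(D:E) + I(D:F|E) + I(E:F|D) + I(D:E|F) is well-defined; in particular I(F:C) = 0 by independence, so the expression reduces to 2·I(D:E|F) + I(D:E|C) − I(D:E) + I(D:F|E) + I(E:F|D). -/

import Mathlib

open Finset Real

/-- Shannon entropy (base 2) of a finitely supported distribution. -/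
noncomputable def Hd {α : Type*} [Fintype α] (q : α → ℝ) : ℝ :=
  -∑ a, q a * Real.logb 2 (q a)

/-- Distribution of a random variable `X` on a finite probability space `(Ω, p)`. -/
noncomputable def dist {Ω α : Type*} [Fintype Ω] [DecidableEq α]
    (p : Ω → ℝ) (X : Ω → α) : α → ℝ :=
  fun a => ∑ ω, if X ω = a then p ω else 0

/-- Shannon entropy (base 2) of a random variable `X` on `(Ω, p)`. -/
noncomputable def H {Ω α : Type*} [Fintype Ω] [Fintype α] [DecidableEq α]
    (p : Ω → ℝ) (X : Ω → α) : ℝ :=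
  Hd (dist p X)

/-!
Under the product weight `p₁ ω.1 * p₂ ω.2`, a function of the first coordinate and a function of
the second have as joint distribution the product of their marginals, and Shannon entropy is
additive on product distributions. Hence I(F:C) = 0, and the budget identity is linear arithmetic.
-/

lemma mul_logb_mul (x y : ℝ) :
    x * y * logb 2 (x * y) = y * (x * logb 2 x) + x * (y * logb 2 y) := by
  rcases eq_or_ne x 0 with rfl | hx
  · simp
  rcases eq_or_ne y 0 with rfl | hy
  · simp
  rw [logb_mul hx hy]
  ring

lemma Hd_mul {α β : Type*} [Fintype α] [Fintype β] (q : α → ℝ) (r : β → ℝ)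
    (hq : ∑ a, q a = 1) (hr : ∑ b, r b = 1) :
    Hd (fun ab : α × β => q ab.1 * r ab.2) = Hd q + Hd r := by
  simp only [Hd, Fintype.sum_prod_type, mul_logb_mul, sum_add_distrib, ← sum_mul, ← mul_sum,
    hq, hr, one_mul]
  ring

lemma sum_dist {Ω α : Type*} [Fintype Ω] [Fintype α] [DecidableEq α] (p : Ω → ℝ) (X : Ω → α) :
    ∑ a, dist p X a = ∑ ω, p ω := by
  simp only [_root_.dist]
  rw [sum_comm]
  simp

section ProductWeight

variable {Ω₁ Ω₂ α β : Type*} [Fintype Ω₁] [Fintype Ω₂] [DecidableEq α] [DecidableEq β]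
  (p₁ : Ω₁ → ℝ) (p₂ : Ω₂ → ℝ)

lemma sum_ite_and_mul (P : Ω₁ → Prop) (Q : Ω₂ → Prop) [DecidablePred P] [DecidablePred Q] :
    ∑ ω : Ω₁ × Ω₂, (if P ω.1 ∧ Q ω.2 then p₁ ω.1 * p₂ ω.2 else 0)
      = (∑ x, if P x then p₁ x else 0) * ∑ y, if Q y then p₂ y else 0 := by
  simp only [Fintype.sum_prod_type, sum_mul_sum, ite_zero_mul_ite_zero]

lemma dist_comp_fst (hp₂ : ∑ y, p₂ y = 1) (X : Ω₁ → α) :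
    dist (fun ω : Ω₁ × Ω₂ => p₁ ω.1 * p₂ ω.2) (fun ω => X ω.1) = dist p₁ X := by
  funext a
  simpa [_root_.dist, hp₂] using sum_ite_and_mul p₁ p₂ (fun x => X x = a) (fun _ => True)

lemma dist_comp_snd (hp₁ : ∑ x, p₁ x = 1) (Y : Ω₂ → β) :
    dist (fun ω : Ω₁ × Ω₂ => p₁ ω.1 * p₂ ω.2) (fun ω => Y ω.2) = dist p₂ Y := by
  funext b
  simpa [_root_.dist, hp₁] using sum_ite_and_mul p₁ p₂ (fun _ => True) (fun y => Y y = b)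

lemma dist_pair_snd_fst (X : Ω₁ → α) (Y : Ω₂ → β) :
    dist (fun ω : Ω₁ × Ω₂ => p₁ ω.1 * p₂ ω.2) (fun ω => (Y ω.2, X ω.1))
      = fun ba => dist p₂ Y ba.1 * dist p₁ X ba.2 := by
  funext ⟨b, a⟩
  rw [mul_comm]
  simpa [_root_.dist, and_comm] using sum_ite_and_mul p₁ p₂ (fun x => X x = a) (fun y => Y y = b)

lemma H_pair_snd_fst_eq_add [Fintype α] [Fintype β] (hp₁ : ∑ x, p₁ x = 1) (hp₂ : ∑ y, p₂ y = 1)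
    (X : Ω₁ → α) (Y : Ω₂ → β) :
    H (fun ω : Ω₁ × Ω₂ => p₁ ω.1 * p₂ ω.2) (fun ω => (Y ω.2, X ω.1))
      = H (fun ω : Ω₁ × Ω₂ => p₁ ω.1 * p₂ ω.2) (fun ω => Y ω.2)
        + H (fun ω : Ω₁ × Ω₂ => p₁ ω.1 * p₂ ω.2) (fun ω => X ω.1) := by
  simp only [H, dist_pair_snd_fst, dist_comp_fst p₁ p₂ hp₂, dist_comp_snd p₁ p₂ hp₁]
  exact Hd_mul _ _ ((sum_dist p₂ Y).trans hp₂) ((sum_dist p₁ X).trans hp₁)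

end ProductWeight

theorem zhang_yeung_budget_indep_sources_general {Ω₁ Ω₂ γ δ ε ζ : Type*}
    [Fintype Ω₁] [Fintype Ω₂]
    [Fintype γ] [DecidableEq γ] [Fintype δ] [DecidableEq δ]
    [Fintype ε] [DecidableEq ε] [Fintype ζ] [DecidableEq ζ]
    (p₁ : Ω₁ → ℝ) (hp₁1 : ∑ ω, p₁ ω = 1)
    (p₂ : Ω₂ → ℝ) (hp₂1 : ∑ ω, p₂ ω = 1)
    (c : Ω₁ → γ) (f : Ω₂ → ζ) (d : Ω₁ × Ω₂ → δ) (e : Ω₁ × Ω₂ → ε) :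
    letI p : Ω₁ × Ω₂ → ℝ := fun ω => p₁ ω.1 * p₂ ω.2
    letI C : Ω₁ × Ω₂ → γ := fun ω => c ω.1
    letI F : Ω₁ × Ω₂ → ζ := fun ω => f ω.2
    letI I2 : ℝ := H p d + H p e - H p (fun ω => (d ω, e ω))  -- I(D:E)
    letI IdeF : ℝ := H p (fun ω => (d ω, F ω)) + H p (fun ω => (e ω, F ω))
      - H p (fun ω => (d ω, e ω, F ω)) - H p F  -- I(D:E|F)
    letI IdeC : ℝ := H p (fun ω => (d ω, C ω)) + H p (fun ω => (e ω, C ω))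
      - H p (fun ω => (d ω, e ω, C ω)) - H p C  -- I(D:E|C)
    letI IdfE : ℝ := H p (fun ω => (d ω, e ω)) + H p (fun ω => (F ω, e ω))
      - H p (fun ω => (d ω, F ω, e ω)) - H p e  -- I(D:F|E)
    letI IefD : ℝ := H p (fun ω => (e ω, d ω)) + H p (fun ω => (F ω, d ω))
      - H p (fun ω => (e ω, F ω, d ω)) - H p d  -- I(E:F|D)
    letI Ifc : ℝ := H p F + H p C - H p (fun ω => (F ω, C ω))  -- I(F:C)
    Ifc = 0 ∧
      IdeF + IdeC + Ifc - I2 + IdfE + IefD + IdeF =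
        2 * IdeF + IdeC - I2 + IdfE + IefD := by
  have hFC := H_pair_snd_fst_eq_add p₁ p₂ hp₁1 hp₂1 c f
  exact ⟨by linarith, by linarith⟩

/-- For variables generated from two independent sources L₁, L₂, with C a function of
L₁ alone and F a function of L₂ alone: I(F:C) = 0, so the Zhang–Yeung budget equals
2·I(D:E|F) + I(D:E|C) − I(D:E) + I(D:F|E) + I(E:F|D). -/
theorem zhang_yeung_budget_indep_sources {Ω₁ Ω₂ γ δ ε ζ : Type*}
    [Fintype Ω₁] [Fintype Ω₂]
    [Fintype γ] [DecidableEq γ] [Fintype δ] [DecidableEq δ]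
    [Fintype ε] [DecidableEq ε] [Fintype ζ] [DecidableEq ζ]
    (p₁ : Ω₁ → ℝ) (hp₁ : ∀ ω, 0 ≤ p₁ ω) (hp₁1 : ∑ ω, p₁ ω = 1)
    (p₂ : Ω₂ → ℝ) (hp₂ : ∀ ω, 0 ≤ p₂ ω) (hp₂1 : ∑ ω, p₂ ω = 1)
    (c : Ω₁ → γ) (f : Ω₂ → ζ) (d : Ω₁ × Ω₂ → δ) (e : Ω₁ × Ω₂ → ε) :
    letI p : Ω₁ × Ω₂ → ℝ := fun ω => p₁ ω.1 * p₂ ω.2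
    letI C : Ω₁ × Ω₂ → γ := fun ω => c ω.1
    letI F : Ω₁ × Ω₂ → ζ := fun ω => f ω.2
    letI I2 : ℝ := H p d + H p e - H p (fun ω => (d ω, e ω))  -- I(D:E)
    letI IdeF : ℝ := H p (fun ω => (d ω, F ω)) + H p (fun ω => (e ω, F ω))
      - H p (fun ω => (d ω, e ω, F ω)) - H p F  -- I(D:E|F)
    letI IdeC : ℝ := H p (fun ω => (d ω, C ω)) + H p (fun ω => (e ω, C ω))
      - H p (fun ω => (d ω, e ω, C ω)) - H p C  -- I(D:E|C)
    letI IdfE : ℝ := H p (fun ω => (d ω, e ω)) + H p (fun ω => (F ω, e ω))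
      - H p (fun ω => (d ω, F ω, e ω)) - H p e  -- I(D:F|E)
    letI IefD : ℝ := H p (fun ω => (e ω, d ω)) + H p (fun ω => (F ω, d ω))
      - H p (fun ω => (e ω, F ω, d ω)) - H p d  -- I(E:F|D)
    letI Ifc : ℝ := H p F + H p C - H p (fun ω => (F ω, C ω))  -- I(F:C)
    Ifc = 0 ∧
      IdeF + IdeC + Ifc - I2 + IdfE + IefD + IdeF =
        2 * IdeF + IdeC - I2 + IdfE + IefD :=
  zhang_yeung_budget_indep_sources_general p₁ hp₁1 p₂ hp₂1 c f d e
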